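/- arXiv:2001.08729 — 2 statements merged into one kernel-verified Lean document; each statement's English description precedes it below -/
import Mathlib

section
/- Let $Y$ be a smooth manifold with contact form $\alpha$, let $\xi = \ker\alpha$, and let $H : Y \to \mathbb{R}$ be smooth with contact Hamiltonian vector field $X_H$ (characterized by $\alpha(X_H) = H$ and $\iota_{X_H}d\alpha = dH(R_\alpha)\alpha - dH$, where $R_\alpha$ is the Reeb field). Let $C \subseteq Y$ be a submanifold. Then $(X_H)_q$ lies in the $d\alpha$-orthogonal complement of $T_qC \cap \xi_q$ inside $\xi_q$ for every $q \in C$ if and only if $H|_C = 0$. -/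
/-- `0` is also a derivative of `f` within `s` at `x`, and any two derivatives within `s` agree
on the tangent cone. -/
theorem HasFDerivWithinAt.eq_zero_on_span_tangentConeAt {𝕜 E F : Type*}
    [NontriviallyNormedField 𝕜] [NormedAddCommGroup E] [NormedSpace 𝕜 E]
    [NormedAddCommGroup F] [NormedSpace 𝕜 F] {f : E → F} {f' : E →L[𝕜] F} {s : Set E} {x : E}
    (hf : HasFDerivWithinAt f f' s x) (hx : x ∈ s) (hzero : ∀ y ∈ s, f y = 0) {v : E}
    (hv : v ∈ Submodule.span 𝕜 (tangentConeAt 𝕜 s x)) : f' v = 0 := by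
  have hf0 : HasFDerivWithinAt f (0 : E →L[𝕜] F) s x :=
    (hasFDerivWithinAt_const (0 : F) x s).congr (fun y hy ↦ hzero y hy) (hzero x hx)
  have hcone : tangentConeAt 𝕜 s x ⊆ (LinearMap.ker (f' : E →ₗ[𝕜] F) : Set E) :=
    fun w hw ↦ hf.unique_on hf0 hw
  exact Submodule.span_le.2 hcone hv

theorem statement4_general {E : Type*} [NormedAddCommGroup E] [NormedSpace ℝ E]
    (α : E → E →L[ℝ] ℝ) (ω : E → E →L[ℝ] E →L[ℝ] ℝ) (R : E → E)
    (H : E → ℝ) (hH : Differentiable ℝ H)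
    (X : E → E)
    (hX : ∀ q, α q (X q) = H q ∧
      ∀ v, ω q (X q) v = fderiv ℝ H q (R q) * α q v - fderiv ℝ H q v)
    (C : Set E) :
    (∀ q ∈ C, X q ∈ LinearMap.ker (α q : E →ₗ[ℝ] ℝ) ∧
        ∀ v ∈ Submodule.span ℝ (tangentConeAt ℝ C q) ⊓ LinearMap.ker (α q : E →ₗ[ℝ] ℝ),
          ω q (X q) v = 0) ↔
      (∀ q ∈ C, H q = 0) := by
  constructor
  · intro h q hq
    exact (hX q).1.symm.trans (h q hq).1
  · intro h q hq
    refine ⟨(hX q).1.trans (h q hq), fun v hv ↦ ?_⟩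
    obtain ⟨hvTC, hvξ⟩ := Submodule.mem_inf.1 hv
    have hαv : α q v = 0 := hvξ
    have hdHv : fderiv ℝ H q v = 0 :=
      (hH q).hasFDerivAt.hasFDerivWithinAt.eq_zero_on_span_tangentConeAt hq h hvTC
    rw [(hX q).2, hαv, hdHv, mul_zero, sub_zero]

/-- (Local model on a normed space.)  Let `α` be a (pointwise) contact
form on `E` with `dα = ω` and Reeb field `R` (`α(R) = 1`, `ι_R ω = 0`), let `H` be a
smooth function with contact Hamiltonian vector field `X` characterized by
`α(X) = H` and `ι_X ω = dH(R) α - dH`, and let `C ⊆ E` be a submanifold (here: any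
subset, with tangent space `T_q C = span(tangentConeAt ℝ C q)`).  Then `X_q` lies in
the `ω`-orthogonal complement of `T_qC ∩ ξ_q` inside `ξ_q = ker α_q` for every `q ∈ C`
if and only if `H` vanishes on `C`. -/
theorem statement4 {E : Type*} [NormedAddCommGroup E] [NormedSpace ℝ E]
    (α : E → E →L[ℝ] ℝ) (ω : E → E →L[ℝ] E →L[ℝ] ℝ) (R : E → E)
    (hReeb : ∀ q, α q (R q) = 1 ∧ ω q (R q) = 0)
    (H : E → ℝ) (hH : Differentiable ℝ H)
    (X : E → E)
    (hX : ∀ q, α q (X q) = H q ∧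
      ∀ v, ω q (X q) v = fderiv ℝ H q (R q) * α q v - fderiv ℝ H q v)
    (C : Set E) :
    (∀ q ∈ C, X q ∈ LinearMap.ker (α q : E →ₗ[ℝ] ℝ) ∧
        ∀ v ∈ Submodule.span ℝ (tangentConeAt ℝ C q) ⊓ LinearMap.ker (α q : E →ₗ[ℝ] ℝ),
          ω q (X q) v = 0) ↔
      (∀ q ∈ C, H q = 0) :=
  statement4_general α ω R H hH X hX C
end

section
/- Let $F : (a,\infty) \to (-\infty, 0]$ be continuous with $F(u) < 0$ for $u > u_0$ and $F(u)=0$ for $u \leq u_0$, and let $G(u) = \int_{u_1}^u dv/F(v)$ for some fixed $u_1 > u_0$, assumed to define a diffeomorphism $G : (u_0,\infty) \to \mathbb{R}$ (this uses $\int_{u_1}^\infty du/F(u) = -\infty$). Let $0 < d_z \leq d_y$ and let $u : I \to \mathbb{R}$ be differentiable on an interval $I \ni 0$ with $u(0) > u_0$ and $-d_z F(u(t)) \leq u'(t) \leq -d_y F(u(t))$ for all $t \in I$. Then for all $t \in I$ with $t \geq 0$: $G^{-1}(G(u(0)) - d_z t) \leq u(t) \leq G^{-1}(G(u(0)) - d_y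 t)$. -/
/-!
Along the solution `u` stays above `u₀` (it is nondecreasing), so `φ = G ∘ u` is differentiable
with `φ' = u' / F(u) ∈ [-d_y, -d_z]`, the division by `F(u) < 0` reversing the sandwich on `u'`.
The mean value inequality gives `G(u 0) - d_y t ≤ G(u t) ≤ G(u 0) - d_z t`, and applying the
decreasing map `G⁻¹` turns these into the claimed bounds on `u t`.
-/

open Set

lemma hasDerivAt_of_eqOn_intervalIntegral {f G : ℝ → ℝ} {s : Set ℝ} {c x : ℝ}
    (hs : IsOpen s) (hs' : s.OrdConnected) (hf : ContinuousOn f s) (hc : c ∈ s)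
    (hG : EqOn G (fun y => ∫ v in c..y, f v) s) (hx : x ∈ s) :
    HasDerivAt G (f x) x := by
  have hint : IntervalIntegrable f MeasureTheory.volume c x :=
    (hf.mono (hs'.uIcc_subset hc hx)).intervalIntegrable
  have hderiv : HasDerivAt (fun y => ∫ v in c..y, f v) (f x) x :=
    intervalIntegral.integral_hasDerivAt_right hint (hf.stronglyMeasurableAtFilter hs x hx)
      (hf.continuousAt (hs.mem_nhds hx))
  exact hderiv.congr_of_eventuallyEq (Filter.eventuallyEq_of_mem (hs.mem_nhds hx) hG)

lemma antitone_of_leftInvOn_of_surjOn {α β : Type*} [LinearOrder α] [Preorder β]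
    {G : α → β} {Ginv : β → α} {s : Set α} (hG : StrictAntiOn G s)
    (hinv : LeftInvOn Ginv G s) (hsurj : SurjOn G s univ) : Antitone Ginv := by
  intro a b hab
  obtain ⟨x, hx, rfl⟩ := hsurj (mem_univ a)
  obtain ⟨y, hy, rfl⟩ := hsurj (mem_univ b)
  rw [hinv hx, hinv hy]
  exact (hG.le_iff_ge hx hy).mp hab

lemma Convex.image_sub_mem_Icc_of_hasDerivAt {D : Set ℝ} (hD : Convex ℝ D) {f f' : ℝ → ℝ}
    {m M : ℝ} (hf : ∀ x ∈ D, HasDerivAt f (f' x) x) (hf' : ∀ x ∈ D, f' x ∈ Icc m M)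
    {x y : ℝ} (hx : x ∈ D) (hy : y ∈ D) (hxy : x ≤ y) :
    f y - f x ∈ Icc (m * (y - x)) (M * (y - x)) := by
  have hcont : ContinuousOn f D := fun z hz => (hf z hz).continuousAt.continuousWithinAt
  have hdiff : DifferentiableOn ℝ f (interior D) := fun z hz =>
    (hf z (interior_subset hz)).differentiableAt.differentiableWithinAt
  have hderiv : ∀ z ∈ interior D, deriv f z ∈ Icc m M := fun z hz => by
    rw [(hf z (interior_subset hz)).deriv]
    exact hf' z (interior_subset hz)
  exact ⟨hD.mul_sub_le_image_sub_of_le_deriv hcont hdiff (fun z hz => (hderiv z hz).1)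
      x hx y hy hxy,
    hD.image_sub_le_mul_sub_of_deriv_le hcont hdiff (fun z hz => (hderiv z hz).2) x hx y hy hxy⟩

lemma Convex.comp_sub_mem_Icc_of_sandwich {J : Set ℝ} (hJ : Convex ℝ J) {F G u u' : ℝ → ℝ}
    {dy dz : ℝ} (hF : ∀ t ∈ J, F (u t) < 0)
    (hG : ∀ t ∈ J, HasDerivAt G (1 / F (u t)) (u t)) (hu : ∀ t ∈ J, HasDerivAt u (u' t) t)
    (hsand : ∀ t ∈ J, -(dz * F (u t)) ≤ u' t ∧ u' t ≤ -(dy * F (u t)))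
    {s t : ℝ} (hs : s ∈ J) (ht : t ∈ J) (hst : s ≤ t) :
    G (u t) - G (u s) ∈ Icc (-dy * (t - s)) (-dz * (t - s)) := by
  have hGu : ∀ r ∈ J, HasDerivAt (G ∘ u) (u' r / F (u r)) r := fun r hr => by
    simpa [div_eq_inv_mul] using (hG r hr).comp r (hu r hr)
  have hGu' : ∀ r ∈ J, u' r / F (u r) ∈ Icc (-dy) (-dz) := fun r hr => by
    obtain ⟨hlower, hupper⟩ := hsand r hr
    constructor
    · rw [le_div_iff_of_neg (hF r hr)]; linarith
    · rw [div_le_iff_of_neg (hF r hr)]; linarith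
  exact hJ.image_sub_mem_Icc_of_hasDerivAt hGu hGu' hs ht hst

theorem statement12_general (u0 u1 dy dz : ℝ) (hdz : 0 < dz)
    (F : ℝ → ℝ) (hFcont : Continuous F)
    (hFnonpos : ∀ u, F u ≤ 0)
    (hFneg : ∀ u, u0 < u → F u < 0)
    (hu1 : u0 < u1)
    (G Ginv : ℝ → ℝ)
    (hG : ∀ u ∈ Set.Ioi u0, G u = ∫ v in u1..u, 1 / F v)
    (hGinv : ∀ u ∈ Set.Ioi u0, Ginv (G u) = u)
    (hGsurj : ∀ w : ℝ, ∃ u ∈ Set.Ioi u0, G u = w)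
    (I : Set ℝ) (hI : I.OrdConnected) (h0I : (0 : ℝ) ∈ I)
    (u u' : ℝ → ℝ) (hderiv : ∀ t ∈ I, HasDerivAt u (u' t) t)
    (hu0 : u0 < u 0)
    (hsand : ∀ t ∈ I, -(dz * F (u t)) ≤ u' t ∧ u' t ≤ -(dy * F (u t))) :
    ∀ t ∈ I, 0 ≤ t →
      Ginv (G (u 0) - dz * t) ≤ u t ∧ u t ≤ Ginv (G (u 0) - dy * t) := by
  have hGd : ∀ x ∈ Ioi u0, HasDerivAt G (1 / F x) x :=
    fun x hx => hasDerivAt_of_eqOn_intervalIntegral (f := fun v => 1 / F v) isOpen_Ioi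
      ordConnected_Ioi (continuousOn_const.div hFcont.continuousOn fun v hv => (hFneg v hv).ne)
      hu1 hG hx
  have hGanti : StrictAntiOn G (Ioi u0) :=
    strictAntiOn_of_hasDerivWithinAt_neg (convex_Ioi u0)
      (fun x hx => (hGd x hx).continuousAt.continuousWithinAt)
      (fun x hx => (hGd x (interior_subset hx)).hasDerivWithinAt)
      (fun x hx => one_div_neg.mpr (hFneg x (interior_subset hx)))
  have hGinv_anti : Antitone Ginv :=
    antitone_of_leftInvOn_of_surjOn hGanti hGinv fun w _ => hGsurj w
  have hIconv : Convex ℝ I := hI.convex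
  have hu_mono : MonotoneOn u I :=
    monotoneOn_of_hasDerivWithinAt_nonneg hIconv
      (fun t ht => (hderiv t ht).continuousAt.continuousWithinAt)
      (fun t ht => (hderiv t (interior_subset ht)).hasDerivWithinAt)
      (fun t ht => by nlinarith [(hsand t (interior_subset ht)).1, hFnonpos (u t)])
  intro t ht ht0
  have htJ : t ∈ I ∩ Ici 0 := ⟨ht, ht0⟩
  have huJ : ∀ s ∈ I ∩ Ici 0, u0 < u s := fun s hs => hu0.trans_le (hu_mono h0I hs.1 hs.2)
  obtain ⟨hlower, hupper⟩ := (hIconv.inter (convex_Ici 0)).comp_sub_mem_Icc_of_sandwich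
    (fun s hs => hFneg _ (huJ s hs)) (fun s hs => hGd _ (huJ s hs))
    (fun s hs => hderiv s hs.1) (fun s hs => hsand s hs.1) ⟨h0I, self_mem_Ici⟩ htJ ht0
  rw [sub_zero] at hlower hupper
  have hut := hGinv (u t) (huJ t htJ)
  exact ⟨hut ▸ hGinv_anti (by linarith), hut ▸ hGinv_anti (by linarith)⟩

/-- (Bihari-type comparison, Proposition `bihari` of the paper.)
Let `F ≤ 0` be continuous, negative exactly on `(u₀, ∞)`, let
`G(u) = ∫_{u₁}^u dv / F(v)` define a (strictly decreasing) bijection from `(u₀, ∞)`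
onto `ℝ` with inverse `Ginv`, let `0 < d_z ≤ d_y`, and let `u` be differentiable on an
interval `I ∋ 0` with `u(0) > u₀` and `-d_z F(u(t)) ≤ u'(t) ≤ -d_y F(u(t))` on `I`.
Then `Ginv(G(u(0)) - d_z t) ≤ u(t) ≤ Ginv(G(u(0)) - d_y t)` for all `t ∈ I` with
`t ≥ 0`. -/
theorem statement12 (u0 u1 dy dz : ℝ) (hdz : 0 < dz) (hdydz : dz ≤ dy)
    (F : ℝ → ℝ) (hFcont : Continuous F)
    (hFnonpos : ∀ u, F u ≤ 0)
    (hFneg : ∀ u, u0 < u → F u < 0) (hFzero : ∀ u ≤ u0, F u = 0)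
    (hu1 : u0 < u1)
    (G Ginv : ℝ → ℝ)
    (hG : ∀ u ∈ Set.Ioi u0, G u = ∫ v in u1..u, 1 / F v)
    (hGinv : ∀ u ∈ Set.Ioi u0, Ginv (G u) = u)
    (hGsurj : ∀ w : ℝ, ∃ u ∈ Set.Ioi u0, G u = w)
    (I : Set ℝ) (hI : I.OrdConnected) (h0I : (0 : ℝ) ∈ I)
    (u u' : ℝ → ℝ) (hderiv : ∀ t ∈ I, HasDerivAt u (u' t) t)
    (hu0 : u0 < u 0)
    (hsand : ∀ t ∈ I, -(dz * F (u t)) ≤ u' t ∧ u' t ≤ -(dy * F (u t))) :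
    ∀ t ∈ I, 0 ≤ t →
      Ginv (G (u 0) - dz * t) ≤ u t ∧ u t ≤ Ginv (G (u 0) - dy * t) :=
  statement12_general u0 u1 dy dz hdz F hFcont hFnonpos hFneg hu1 G Ginv hG hGinv hGsurj I hI h0I u
    u' hderiv hu0 hsand
end
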